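/- Let 𝒜 be a conformal net and H, K ∈ Rep(𝒜). The path continuation γ^•: H(z₀)⊠K(ζ₀) → H(z₁)⊠K(ζ₁) associated to a path γ in Conf₂(S¹) is independent of the choice of partition of [0,1] used to define it, and homotopic paths (with fixed endpoints) in Conf₂(S¹) induce the same path continuation. -/

import Mathlib

noncomputable section

namespace CNet

/-! ## Conformal nets and their representations -/

/-- An interval of the circle: an open, connected, non-empty, non-dense subset of `S¹`. -/
def IsInterval (s : Set Circle) : Prop :=
  IsOpen s ∧ IsConnected s ∧ ¬ Dense s

/-- The complement interval `I^c`: the interior of the set-theoretic complement. -/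
def intCompl (s : Set Circle) : Set Circle :=
  interior sᶜ

/-- The (open) lower hemisphere `S¹₋` of the circle. -/
def lowerHemi : Set Circle := {z : Circle | (z : ℂ).im < 0}

/-- The (open) upper hemisphere `S¹₊` of the circle. -/
def upperHemi : Set Circle := {z : Circle | 0 < (z : ℂ).im}

/-- A conformal net on `S¹` (core data): a vacuum Hilbert space `H0` with vacuum vector `Ω`,
von Neumann algebras `A I ⊆ B(H0)` indexed by (all subsets, constrained on) intervals `I`,
satisfying isotony, locality, rotation covariance (for the rotation subgroup `Rot ≅ Circle`
of `Möb`, acting on `S¹` by multiplication), invariance and cyclicity of the vacuum. -/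
structure ConformalNet (H0 : Type*) [NormedAddCommGroup H0] [InnerProductSpace ℂ H0]
    [CompleteSpace H0] where
  Ω : H0
  Ω_ne_zero : Ω ≠ 0
  A : Set Circle → VonNeumannAlgebra H0
  isotony : ∀ ⦃s t : Set Circle⦄, IsInterval s → IsInterval t → s ⊆ t →
    ∀ ⦃x : H0 →L[ℂ] H0⦄, x ∈ A s → x ∈ A t
  locality : ∀ ⦃s t : Set Circle⦄, IsInterval s → IsInterval t → Disjoint s t →
    ∀ x ∈ A s, ∀ y ∈ A t, x * y = y * x
  /-- The unitary representation of the rotation group `Rot ≅ Circle ⊆ Möb` on `H0`. -/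
  rotU : Circle → (H0 →L[ℂ] H0)
  rotU_mem_unitary : ∀ z, rotU z ∈ unitary (H0 →L[ℂ] H0)
  rotU_one : rotU 1 = 1
  rotU_mul : ∀ z w, rotU (z * w) = rotU z * rotU w
  rotU_continuous : ∀ ξ : H0, Continuous fun z => rotU z ξ
  rot_covariant : ∀ (z : Circle) ⦃s : Set Circle⦄, IsInterval s →
    ∀ x ∈ A s, rotU z * x * rotU z⁻¹ ∈ A ((z * ·) '' s)
  vacuum_invariant : ∀ z, rotU z Ω = Ω
  cyclic : Dense ((Submodule.span ℂ
      {ξ : H0 | ∃ s, IsInterval s ∧ ∃ x ∈ A s, ξ = x Ω} : Submodule ℂ H0) : Set H0)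

variable {H0 : Type*} [NormedAddCommGroup H0] [InnerProductSpace ℂ H0] [CompleteSpace H0]

/-- A representation of a conformal net: a Hilbert space `H` together with compatible
`*`-homomorphisms `π_I : 𝒜(I) → B(H)` (encoded as maps `B(H0) → B(H)` which are
`*`-homomorphisms on `𝒜(I)`). -/
structure NetRep (𝒜 : ConformalNet H0) (H : Type*) [NormedAddCommGroup H]
    [InnerProductSpace ℂ H] [CompleteSpace H] where
  π : Set Circle → (H0 →L[ℂ] H0) → (H →L[ℂ] H)
  π_add : ∀ (s : Set Circle) ⦃x y⦄, x ∈ 𝒜.A s → y ∈ 𝒜.A s → π s (x + y) = π s x + π s y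
  π_smul : ∀ (s : Set Circle) (c : ℂ) ⦃x⦄, x ∈ 𝒜.A s → π s (c • x) = c • π s x
  π_mul : ∀ (s : Set Circle) ⦃x y⦄, x ∈ 𝒜.A s → y ∈ 𝒜.A s → π s (x * y) = π s x * π s y
  π_star : ∀ (s : Set Circle) ⦃x⦄, x ∈ 𝒜.A s → π s (star x) = star (π s x)
  π_one : ∀ s : Set Circle, π s 1 = 1
  compat : ∀ ⦃s t : Set Circle⦄, IsInterval s → IsInterval t → s ⊆ t →
    ∀ ⦃x⦄, x ∈ 𝒜.A s → π t x = π s x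

variable {𝒜 : ConformalNet H0}
variable {H K R : Type*} [NormedAddCommGroup H] [InnerProductSpace ℂ H] [CompleteSpace H]
  [NormedAddCommGroup K] [InnerProductSpace ℂ K] [CompleteSpace K]
  [NormedAddCommGroup R] [InnerProductSpace ℂ R] [CompleteSpace R]

/-- The vacuum representation of `𝒜` on `H0`. -/
def ConformalNet.vac (𝒜 : ConformalNet H0) : NetRep 𝒜 H0 where
  π _ x := x
  π_add _ _ _ _ _ := rfl
  π_smul _ _ _ _ := rfl
  π_mul _ _ _ _ _ := rfl
  π_star _ _ _ := rfl
  π_one _ := rfl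
  compat _ _ _ _ _ _ _ := rfl

/-- `Hom_{𝒜(s)}(H0, H)`: bounded operators intertwining the `𝒜(s)`-actions. -/
def NetRep.inter {H : Type*} [NormedAddCommGroup H] [InnerProductSpace ℂ H] [CompleteSpace H]
    (ρ : NetRep 𝒜 H) (s : Set Circle) : Set (H0 →L[ℂ] H) :=
  {T | ∀ ⦃x⦄, x ∈ 𝒜.A s → T ∘L x = ρ.π s x ∘L T}

/-- Morphisms of representations: bounded maps intertwining all the `𝒜(I)`-actions. -/
def IsRepMorphism {H K : Type*} [NormedAddCommGroup H] [InnerProductSpace ℂ H]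
    [CompleteSpace H] [NormedAddCommGroup K] [InnerProductSpace ℂ K] [CompleteSpace K]
    (ρH : NetRep 𝒜 H) (ρK : NetRep 𝒜 K) (F : H →L[ℂ] K) : Prop :=
  ∀ ⦃s : Set Circle⦄, IsInterval s → ∀ ⦃x⦄, x ∈ 𝒜.A s → F ∘L ρH.π s x = ρK.π s x ∘L F

/-- The set `H(I)` of `I`-bounded vectors of a representation. -/
def NetRep.bdd {H : Type*} [NormedAddCommGroup H] [InnerProductSpace ℂ H] [CompleteSpace H]
    (ρ : NetRep 𝒜 H) (I : Set Circle) : Set H :=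
  {ξ | ∃ T ∈ ρ.inter (intCompl I), T 𝒜.Ω = ξ}

open Classical in
/-- `Z(ξ, I)`: a choice of an operator `T ∈ Hom_{𝒜(I^c)}(H0,H)` with `T Ω = ξ`
(the unique such operator when `ξ ∈ H(I)`, by the Reeh–Schlieder theorem). -/
def NetRep.Z {H : Type*} [NormedAddCommGroup H] [InnerProductSpace ℂ H] [CompleteSpace H]
    (ρ : NetRep 𝒜 H) (I : Set Circle) (ξ : H) : H0 →L[ℂ] H :=
  if h : ∃ T ∈ ρ.inter (intCompl I), T 𝒜.Ω = ξ then h.choose else 0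

theorem NetRep.Z_spec {H : Type*} [NormedAddCommGroup H] [InnerProductSpace ℂ H]
    [CompleteSpace H] (ρ : NetRep 𝒜 H) (I : Set Circle) (ξ : H) (h : ξ ∈ ρ.bdd I) :
    ρ.Z I ξ ∈ ρ.inter (intCompl I) ∧ ρ.Z I ξ 𝒜.Ω = ξ := by
  classical
  rw [NetRep.Z, dif_pos (show ∃ T ∈ ρ.inter (intCompl I), T 𝒜.Ω = ξ from h)]
  exact (show ∃ T ∈ ρ.inter (intCompl I), T 𝒜.Ω = ξ from h).choose_spec

/-! ## Connes fusion -/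

/-- The inner product `⟨Z(η',J)* Z(η,J) Z(ξ',I)* Z(ξ,I) Ω , Ω⟩` defining the Connes fusion
`H(I) ⊠ K(J)` over two disjoint intervals. -/
def fusionInner (𝒜 : ConformalNet H0) (ρH : NetRep 𝒜 H) (ρK : NetRep 𝒜 K)
    (I J : Set Circle) (ξ : H) (η : K) (ξ' : H) (η' : K) : ℂ :=
  inner ℂ ((ContinuousLinearMap.adjoint (ρK.Z J η'))
      ((ρK.Z J η) ((ContinuousLinearMap.adjoint (ρH.Z I ξ')) ((ρH.Z I ξ) 𝒜.Ω)))) 𝒜.Ω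

/-- The inner product `⟨π^K_I(Z(ξ',I)* Z(ξ,I)) η , η'⟩` defining the Connes fusion
`H(I) ⊠ K` over `I` on the left. -/
def leftFusionInner (𝒜 : ConformalNet H0) (ρH : NetRep 𝒜 H) (ρK : NetRep 𝒜 K)
    (I : Set Circle) (ξ : H) (η : K) (ξ' : H) (η' : K) : ℂ :=
  inner ℂ ((ρK.π I ((ContinuousLinearMap.adjoint (ρH.Z I ξ')) ∘L (ρH.Z I ξ))) η) η'

/-- The inner product `⟨π^H_J(Z(η',J)* Z(η,J)) ξ , ξ'⟩` defining the Connes fusion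
`H ⊠ K(J)` over `J` on the right. -/
def rightFusionInner (𝒜 : ConformalNet H0) (ρH : NetRep 𝒜 H) (ρK : NetRep 𝒜 K)
    (J : Set Circle) (ξ : H) (η : K) (ξ' : H) (η' : K) : ℂ :=
  inner ℂ ((ρH.π J ((ContinuousLinearMap.adjoint (ρK.Z J η')) ∘L (ρK.Z J η))) ξ) ξ'

/-- `(F, u)` realizes the Connes fusion `H(I) ⊠ K(J)` of `H` and `K` over the disjoint
intervals `I, J`: the completion of `H(I) ⊗ K(J)` for the fusion inner product. -/
structure IsConnesFusion (𝒜 : ConformalNet H0) (ρH : NetRep 𝒜 H) (ρK : NetRep 𝒜 K)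
    (I J : Set Circle) {F : Type*} [NormedAddCommGroup F] [InnerProductSpace ℂ F]
    [CompleteSpace F] (u : H → K → F) : Prop where
  inner_eq : ∀ ξ ∈ ρH.bdd I, ∀ ξ' ∈ ρH.bdd I, ∀ η ∈ ρK.bdd J, ∀ η' ∈ ρK.bdd J,
    (inner ℂ (u ξ η) (u ξ' η') : ℂ) = fusionInner 𝒜 ρH ρK I J ξ η ξ' η'
  dense_span : Dense ((Submodule.span ℂ
    {v : F | ∃ ξ ∈ ρH.bdd I, ∃ η ∈ ρK.bdd J, v = u ξ η} : Submodule ℂ F) : Set F)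

/-- `(F, u)` realizes the Connes fusion `H(I) ⊠ K` of `H` and `K` over `I` on the left. -/
structure IsLeftFusion (𝒜 : ConformalNet H0) (ρH : NetRep 𝒜 H) (ρK : NetRep 𝒜 K)
    (I : Set Circle) {F : Type*} [NormedAddCommGroup F] [InnerProductSpace ℂ F]
    [CompleteSpace F] (u : H → K → F) : Prop where
  inner_eq : ∀ ξ ∈ ρH.bdd I, ∀ ξ' ∈ ρH.bdd I, ∀ (η η' : K),
    (inner ℂ (u ξ η) (u ξ' η') : ℂ) = leftFusionInner 𝒜 ρH ρK I ξ η ξ' η'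
  dense_span : Dense ((Submodule.span ℂ
    {v : F | ∃ ξ ∈ ρH.bdd I, ∃ η : K, v = u ξ η} : Submodule ℂ F) : Set F)

/-- `(F, u)` realizes the Connes fusion `H ⊠ K(J)` of `H` and `K` over `J` on the right. -/
structure IsRightFusion (𝒜 : ConformalNet H0) (ρH : NetRep 𝒜 H) (ρK : NetRep 𝒜 K)
    (J : Set Circle) {F : Type*} [NormedAddCommGroup F] [InnerProductSpace ℂ F]
    [CompleteSpace F] (u : H → K → F) : Prop where
  inner_eq : ∀ (ξ ξ' : H), ∀ η ∈ ρK.bdd J, ∀ η' ∈ ρK.bdd J,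
    (inner ℂ (u ξ η) (u ξ' η') : ℂ) = rightFusionInner 𝒜 ρH ρK J ξ η ξ' η'
  dense_span : Dense ((Submodule.span ℂ
    {v : F | ∃ ξ : H, ∃ η ∈ ρK.bdd J, v = u ξ η} : Submodule ℂ F) : Set F)

/-! ## Systems of fusions and path continuations -/

/-- Pairs of subsets of the circle. -/
abbrev CPair : Type := Set Circle × Set Circle

/-- A pair of disjoint intervals. -/
def GoodPair (P : CPair) : Prop := IsInterval P.1 ∧ IsInterval P.2 ∧ Disjoint P.1 P.2

def subPair (P Q : CPair) : Prop := P.1 ⊆ Q.1 ∧ P.2 ⊆ Q.2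

def memPair (x : Circle × Circle) (P : CPair) : Prop := x.1 ∈ P.1 ∧ x.2 ∈ P.2

/-- The configuration space `Conf₂(S¹)` of two distinct points of the circle. -/
def Conf2 : Type := {x : Circle × Circle // x.1 ≠ x.2}

instance : TopologicalSpace Conf2 :=
  inferInstanceAs (TopologicalSpace {x : Circle × Circle // x.1 ≠ x.2})

/-- A bundled (separable) complex Hilbert space. -/
structure HilbertC where
  V : Type
  [nacg : NormedAddCommGroup V]
  [ips : InnerProductSpace ℂ V]
  [cs : CompleteSpace V]

attribute [instance] HilbertC.nacg HilbertC.ips HilbertC.cs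

/-- A system of Hilbert spaces indexed by subsets of the circle, together with the canonical
unitary equivalences induced by inclusions of intervals. -/
structure IntervalSystem where
  F : Set Circle → HilbertC
  incl : ∀ ⦃I J : Set Circle⦄, I ⊆ J → ((F I).V ≃ₗᵢ[ℂ] (F J).V)

/-- `PathCont1 S γ s t I J V` : `V` is (a composite of canonical equivalences defining)
the path continuation along `γ|_{[s,t]}` from the space attached to the interval `I` to the
space attached to the interval `J`.  A `basic` step corresponds to a piece of path contained
in a single interval `R`; general continuations are composites of basic ones. -/
inductive PathCont1 (S : IntervalSystem) {z₀ z₁ : Circle} (γ : Path z₀ z₁) :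
    ∀ (s t : unitInterval) (I J : Set Circle), ((S.F I).V ≃ₗᵢ[ℂ] (S.F J).V) → Prop
  | basic (s t : unitInterval) (hst : s ≤ t) (I J R I' J' : Set Circle)
      (hI : IsInterval I) (hJ : IsInterval J) (hR : IsInterval R)
      (hI' : IsInterval I') (hJ' : IsInterval J')
      (hsI' : γ s ∈ I') (htJ' : γ t ∈ J')
      (hI'I : I' ⊆ I) (hI'R : I' ⊆ R) (hJ'J : J' ⊆ J) (hJ'R : J' ⊆ R)
      (hcov : ∀ r : unitInterval, s ≤ r → r ≤ t → γ r ∈ R) :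
      PathCont1 S γ s t I J
        (((S.incl hI'I).symm.trans (S.incl hI'R)).trans
          ((S.incl hJ'R).symm.trans (S.incl hJ'J)))
  | trans {s t r : unitInterval} {I J L : Set Circle}
      {V : (S.F I).V ≃ₗᵢ[ℂ] (S.F J).V} {W : (S.F J).V ≃ₗᵢ[ℂ] (S.F L).V} :
      PathCont1 S γ s t I J V → PathCont1 S γ t r J L W →
      PathCont1 S γ s r I L (V.trans W)

/-- `V` is the path continuation `α^• : H(I) ⊠ K → H(J) ⊠ K` along the full path `γ`. -/
def IsPathCont1 (S : IntervalSystem) {z₀ z₁ : Circle} (γ : Path z₀ z₁) (I J : Set Circle)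
    (V : (S.F I).V ≃ₗᵢ[ℂ] (S.F J).V) : Prop :=
  PathCont1 S γ 0 1 I J V

/-- A system of Hilbert spaces indexed by pairs of subsets of the circle, together with the
canonical unitary equivalences induced by inclusions. -/
structure PairSystem where
  F : CPair → HilbertC
  incl : ∀ ⦃P Q : CPair⦄, subPair P Q → ((F P).V ≃ₗᵢ[ℂ] (F Q).V)

/-- Path continuation (over pairs of intervals) along a path in `Conf₂(S¹)`. -/
inductive PathCont2 (S : PairSystem) {a₀ a₁ : Conf2} (γ : Path a₀ a₁) :
    ∀ (s t : unitInterval) (P Q : CPair), ((S.F P).V ≃ₗᵢ[ℂ] (S.F Q).V) → Prop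
  | basic (s t : unitInterval) (hst : s ≤ t) (P Q R P' Q' : CPair)
      (hP : GoodPair P) (hQ : GoodPair Q) (hR : GoodPair R)
      (hP' : GoodPair P') (hQ' : GoodPair Q')
      (hsP' : memPair (γ s).val P') (htQ' : memPair (γ t).val Q')
      (hP'P : subPair P' P) (hP'R : subPair P' R) (hQ'Q : subPair Q' Q) (hQ'R : subPair Q' R)
      (hcov : ∀ r : unitInterval, s ≤ r → r ≤ t → memPair (γ r).val R) :
      PathCont2 S γ s t P Q
        (((S.incl hP'P).symm.trans (S.incl hP'R)).trans
          ((S.incl hQ'R).symm.trans (S.incl hQ'Q)))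
  | trans {s t r : unitInterval} {P Q L : CPair}
      {V : (S.F P).V ≃ₗᵢ[ℂ] (S.F Q).V} {W : (S.F Q).V ≃ₗᵢ[ℂ] (S.F L).V} :
      PathCont2 S γ s t P Q V → PathCont2 S γ t r Q L W →
      PathCont2 S γ s r P L (V.trans W)

/-- `V` is the path continuation `γ^• : H(I₀) ⊠ K(J₀) → H(I₁) ⊠ K(J₁)` along the full
path `γ` in `Conf₂(S¹)`. -/
def IsPathCont2 (S : PairSystem) {a₀ a₁ : Conf2} (γ : Path a₀ a₁) (P Q : CPair)
    (V : (S.F P).V ≃ₗᵢ[ℂ] (S.F Q).V) : Prop :=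
  PathCont2 S γ 0 1 P Q V

/-- A full system of two-interval Connes fusions `H(I) ⊠ K(J)` of a fixed pair of
representations, together with the canonical equivalences induced by inclusions of
intervals (characterized by sending generators to generators). -/
structure FusionSystem (𝒜 : ConformalNet H0) {H K : Type*} [NormedAddCommGroup H]
    [InnerProductSpace ℂ H] [CompleteSpace H] [NormedAddCommGroup K] [InnerProductSpace ℂ K]
    [CompleteSpace K] (ρH : NetRep 𝒜 H) (ρK : NetRep 𝒜 K) extends PairSystem where
  u : ∀ P : CPair, H → K → (F P).V
  isFusion : ∀ ⦃P : CPair⦄, GoodPair P → IsConnesFusion 𝒜 ρH ρK P.1 P.2 (u P)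
  incl_spec : ∀ ⦃P Q : CPair⦄ (h : subPair P Q), GoodPair P → GoodPair Q →
    ∀ ξ ∈ ρH.bdd P.1, ∀ η ∈ ρK.bdd P.2, incl h (u P ξ η) = u Q ξ η

/-- A full system of left Connes fusions `H(I) ⊠ K` of a fixed pair of representations,
together with the canonical equivalences induced by inclusions of intervals. -/
structure LeftFusionSystem (𝒜 : ConformalNet H0) {H K : Type*} [NormedAddCommGroup H]
    [InnerProductSpace ℂ H] [CompleteSpace H] [NormedAddCommGroup K] [InnerProductSpace ℂ K]
    [CompleteSpace K] (ρH : NetRep 𝒜 H) (ρK : NetRep 𝒜 K) extends IntervalSystem where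
  u : ∀ I : Set Circle, H → K → (F I).V
  isFusion : ∀ ⦃I : Set Circle⦄, IsInterval I → IsLeftFusion 𝒜 ρH ρK I (u I)
  incl_spec : ∀ ⦃I J : Set Circle⦄ (h : I ⊆ J), IsInterval I → IsInterval J →
    ∀ ξ ∈ ρH.bdd I, ∀ η : K, incl h (u I ξ η) = u J ξ η

/-- A full system of right Connes fusions `H ⊠ K(J)` of a fixed pair of representations,
together with the canonical equivalences induced by inclusions of intervals. -/
structure RightFusionSystem (𝒜 : ConformalNet H0) {H K : Type*} [NormedAddCommGroup H]
    [InnerProductSpace ℂ H] [CompleteSpace H] [NormedAddCommGroup K] [InnerProductSpace ℂ K]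
    [CompleteSpace K] (ρH : NetRep 𝒜 H) (ρK : NetRep 𝒜 K) extends IntervalSystem where
  u : ∀ J : Set Circle, H → K → (F J).V
  isFusion : ∀ ⦃J : Set Circle⦄, IsInterval J → IsRightFusion 𝒜 ρH ρK J (u J)
  incl_spec : ∀ ⦃I J : Set Circle⦄ (h : I ⊆ J), IsInterval I → IsInterval J →
    ∀ ξ : H, ∀ η ∈ ρK.bdd I, incl h (u I ξ η) = u J ξ η

/-- `ρF` is the canonical `𝒜`-action on the left Connes fusion `H(I₀) ⊠ K`: for any interval
`L`, the action of `𝒜(L)` is obtained by conjugating the factorwise action on the first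
factor by a path continuation from `I₀` to `L`. -/
def IsLeftFusionAction {𝒜 : ConformalNet H0} {H K : Type*} [NormedAddCommGroup H]
    [InnerProductSpace ℂ H] [CompleteSpace H] [NormedAddCommGroup K] [InnerProductSpace ℂ K]
    [CompleteSpace K] {ρH : NetRep 𝒜 H} {ρK : NetRep 𝒜 K}
    (S : LeftFusionSystem 𝒜 ρH ρK) (I₀ : Set Circle)
    (ρF : NetRep 𝒜 (S.F I₀).V) : Prop :=
  ∀ ⦃L : Set Circle⦄, IsInterval L → ∀ ⦃z₀ z₁ : Circle⦄ (γ : Path z₀ z₁)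
    (V : (S.F I₀).V ≃ₗᵢ[ℂ] (S.F L).V), IsPathCont1 S.toIntervalSystem γ I₀ L V →
    ∀ ⦃x⦄, x ∈ 𝒜.A L → ∀ ξ ∈ ρH.bdd L, ∀ η : K,
      ρF.π L x (V.symm (S.u L ξ η)) = V.symm (S.u L (ρH.π L x ξ) η)

/-- `ρF` is the canonical `𝒜`-action on the right Connes fusion `H ⊠ K(J₀)`. -/
def IsRightFusionAction {𝒜 : ConformalNet H0} {H K : Type*} [NormedAddCommGroup H]
    [InnerProductSpace ℂ H] [CompleteSpace H] [NormedAddCommGroup K] [InnerProductSpace ℂ K]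
    [CompleteSpace K] {ρH : NetRep 𝒜 H} {ρK : NetRep 𝒜 K}
    (S : RightFusionSystem 𝒜 ρH ρK) (J₀ : Set Circle)
    (ρF : NetRep 𝒜 (S.F J₀).V) : Prop :=
  ∀ ⦃L : Set Circle⦄, IsInterval L → ∀ ⦃z₀ z₁ : Circle⦄ (γ : Path z₀ z₁)
    (V : (S.F J₀).V ≃ₗᵢ[ℂ] (S.F L).V), IsPathCont1 S.toIntervalSystem γ J₀ L V →
    ∀ ⦃x⦄, x ∈ 𝒜.A L → ∀ ξ : H, ∀ η ∈ ρK.bdd L,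
      ρF.π L x (V.symm (S.u L ξ η)) = V.symm (S.u L ξ (ρK.π L x η))

/-- The left action `π^l` on a two-interval fusion system, based at the pair `P₀`:
the action of `𝒜(L)` is `(γ^•)⁻¹ (π^H_L(x) ⊠ id) γ^•` for any path continuation `γ^•` from
`P₀` to a pair `(L, M)`. -/
def IsLeftAction2 {𝒜 : ConformalNet H0} {H K : Type*} [NormedAddCommGroup H]
    [InnerProductSpace ℂ H] [CompleteSpace H] [NormedAddCommGroup K] [InnerProductSpace ℂ K]
    [CompleteSpace K] {ρH : NetRep 𝒜 H} {ρK : NetRep 𝒜 K}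
    (S : FusionSystem 𝒜 ρH ρK) (P₀ : CPair)
    (ρF : NetRep 𝒜 (S.F P₀).V) : Prop :=
  ∀ ⦃Q : CPair⦄, GoodPair Q → ∀ ⦃a₀ a₁ : Conf2⦄ (γ : Path a₀ a₁)
    (V : (S.F P₀).V ≃ₗᵢ[ℂ] (S.F Q).V), IsPathCont2 S.toPairSystem γ P₀ Q V →
    ∀ ⦃x⦄, x ∈ 𝒜.A Q.1 → ∀ ξ ∈ ρH.bdd Q.1, ∀ η ∈ ρK.bdd Q.2,
      ρF.π Q.1 x (V.symm (S.u Q ξ η)) = V.symm (S.u Q (ρH.π Q.1 x ξ) η)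

/-- The right action `π^r` on a two-interval fusion system, based at the pair `P₀`:
the action of `𝒜(L)` is `(ϑ^•)⁻¹ (id ⊠ π^K_L(x)) ϑ^•` for any path continuation `ϑ^•` from
`P₀` to a pair `(M, L)`. -/
def IsRightAction2 {𝒜 : ConformalNet H0} {H K : Type*} [NormedAddCommGroup H]
    [InnerProductSpace ℂ H] [CompleteSpace H] [NormedAddCommGroup K] [InnerProductSpace ℂ K]
    [CompleteSpace K] {ρH : NetRep 𝒜 H} {ρK : NetRep 𝒜 K}
    (S : FusionSystem 𝒜 ρH ρK) (P₀ : CPair)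
    (ρF : NetRep 𝒜 (S.F P₀).V) : Prop :=
  ∀ ⦃Q : CPair⦄, GoodPair Q → ∀ ⦃a₀ a₁ : Conf2⦄ (γ : Path a₀ a₁)
    (V : (S.F P₀).V ≃ₗᵢ[ℂ] (S.F Q).V), IsPathCont2 S.toPairSystem γ P₀ Q V →
    ∀ ⦃x⦄, x ∈ 𝒜.A Q.2 → ∀ ξ ∈ ρH.bdd Q.1, ∀ η ∈ ρK.bdd Q.2,
      ρF.π Q.2 x (V.symm (S.u Q ξ η)) = V.symm (S.u Q ξ (ρK.π Q.2 x η))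

/-! ## The conformal symmetry group `Diff⁺_𝒜(S¹)` and conformal covariance -/

/-- An abstract model for the central extension `Diff⁺_𝒜(S¹)` of the universal cover of
`Diff⁺(S¹)` determined by the projective vacuum representation `U` of a conformal net `𝒜`:
a topological group acting on the circle, unitarily represented on the vacuum space, with
distinguished localized subgroups `DI`, generated by them, covariant for the net, with a
central `U(1)` and a distinguished one-parameter subgroup `rot` of lifted rotations
(`rot t = exp̃(i t L₀)`). -/
structure DiffCover (𝒜 : ConformalNet H0) where
  D : Type
  [grp : Group D]
  [top : TopologicalSpace D]
  act : D → Circle → Circle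
  act_one : ∀ z, act 1 z = z
  act_mul : ∀ g h z, act (g * h) z = act g (act h z)
  Uvac : D → (H0 →L[ℂ] H0)
  Uvac_mem_unitary : ∀ g, Uvac g ∈ unitary (H0 →L[ℂ] H0)
  Uvac_one : Uvac 1 = 1
  Uvac_mul : ∀ g h, Uvac (g * h) = Uvac g * Uvac h
  Uvac_continuous : ∀ ξ : H0, Continuous fun g => Uvac g ξ
  /-- The localized subgroup `Diff⁺_𝒜(I)` of elements supported in the interval `I`. -/
  DI : Set Circle → Subgroup D
  localized : ∀ ⦃s : Set Circle⦄, IsInterval s → ∀ g ∈ DI s, Uvac g ∈ 𝒜.A s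
  localized_act : ∀ ⦃s : Set Circle⦄, IsInterval s → ∀ g ∈ DI s, ∀ z ∉ s, act g z = z
  generated : Subgroup.closure (⋃ s ∈ {s : Set Circle | IsInterval s}, (DI s : Set D)) = ⊤
  covariant : ∀ (g : D) ⦃s : Set Circle⦄, IsInterval s → ∀ x ∈ 𝒜.A s,
    Uvac g * x * Uvac g⁻¹ ∈ 𝒜.A (act g '' s)
  /-- The central `U(1) ≅ {V ∈ U(H0) | [V] = [id]}`. -/
  ctr : Circle → D
  ctr_central : ∀ c g, ctr c * g = g * ctr c
  ctr_mul : ∀ c c', ctr (c * c') = ctr c * ctr c'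
  Uvac_ctr : ∀ c, Uvac (ctr c) = (c : ℂ) • (1 : H0 →L[ℂ] H0)
  act_ctr : ∀ c z, act (ctr c) z = z
  /-- The lifted rotations `t ↦ exp̃(i t L₀)` in `M̃öb ⊆ Diff̃⁺(S¹)`. -/
  rot : ℝ → D
  rot_add : ∀ s t, rot (s + t) = rot s * rot t
  rot_continuous : Continuous rot
  act_rot : ∀ (t : ℝ) (z : Circle), act (rot t) z = Circle.exp t * z
  Uvac_rot : ∀ t : ℝ, Uvac (rot t) = 𝒜.rotU (Circle.exp t)

attribute [instance] DiffCover.grp DiffCover.top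

/-- The canonical conformal structure of a representation `H` of `𝒜`: a (strongly
continuous) unitary action of `Diff⁺_𝒜(S¹)` on `H` which acts by the local algebras on
localized elements, with the central `U(1)` acting in the standard way. -/
structure ConfCovariance {𝒜 : ConformalNet H0} (dc : DiffCover 𝒜) {H : Type*}
    [NormedAddCommGroup H] [InnerProductSpace ℂ H] [CompleteSpace H]
    (ρ : NetRep 𝒜 H) where
  Urep : dc.D → (H →L[ℂ] H)
  mem_unitary : ∀ g, Urep g ∈ unitary (H →L[ℂ] H)
  map_one : Urep 1 = 1
  map_mul : ∀ g h, Urep (g * h) = Urep g * Urep h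
  strong_continuous : ∀ ξ : H, Continuous fun g => Urep g ξ
  central : ∀ c : Circle, Urep (dc.ctr c) = (c : ℂ) • (1 : H →L[ℂ] H)
  localized : ∀ ⦃s : Set Circle⦄, IsInterval s → ∀ g ∈ dc.DI s, Urep g = ρ.π s (dc.Uvac g)

/-- The balance `θ_H := e^{-2πi L₀}`: the action on `H` of the lift
`exp̃(-2πi L₀) ∈ M̃öb` of the full clockwise rotation. -/
def ConfCovariance.theta {𝒜 : ConformalNet H0} {dc : DiffCover 𝒜} {H : Type*}
    [NormedAddCommGroup H] [InnerProductSpace ℂ H] [CompleteSpace H] {ρ : NetRep 𝒜 H}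
    (cc : ConfCovariance dc ρ) : H →L[ℂ] H :=
  cc.Urep (dc.rot (-(2 * Real.pi)))

end CNet

/-!
Over good pairs the spaces `S.F P` form a locally constant system: the inclusion maps compose
(for Connes fusions this is checked on the generators `u ξ η`, since a vector bounded for an
interval stays bounded for every larger interval). So two good pairs around a configuration `x`
are identified through the germ of the system at `x`, and this identification is locally constant
in `x`, hence constant on connected sets such as a piece of path inside both pairs. Each step of a
path continuation is such an identification, and two subdivisions of a path are compared piece by
piece. For a homotopy `F`, a Lebesgue number gives a grid of good pairs; the paths `F(σ, ·)` and
`F(σ', ·)` at nearby times then share a continuation, because the short segments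
`F([σ, σ'], t)` joining them stay inside the pairs of the grid.
-/

open Set

theorem unitInterval.induction_of_step {δ : ℝ} (hδ : 0 < δ) {p : unitInterval → Prop}
    (h0 : p 0) (hstep : ∀ s t : unitInterval, s ≤ t → (t : ℝ) ≤ s + δ → p s → p t)
    (t : unitInterval) : p t := by
  obtain ⟨n, hn⟩ := exists_nat_gt (1 / δ)
  suffices h : ∀ k : ℕ, ∀ t : unitInterval, (t : ℝ) ≤ k * δ → p t by
    refine h n t (t.2.2.trans ?_)
    rw [div_lt_iff₀ hδ] at hn
    exact hn.le
  intro k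
  induction k with
  | zero =>
    intro t ht
    obtain rfl : t = 0 := Subtype.ext (le_antisymm (by simpa using ht) t.2.1)
    exact h0
  | succ k ih =>
    intro t ht
    rcases le_or_gt (t : ℝ) (k * δ) with hkt | hkt
    · exact ih t hkt
    · let s : unitInterval := ⟨k * δ, by positivity, hkt.le.trans t.2.2⟩
      exact hstep s t (Subtype.coe_le_coe.mp hkt.le) (by push_cast at ht; simp only [s]; linarith)
        (ih s le_rfl)

theorem unitInterval.dist_prod_lt_of_le {σ τ s r : unitInterval} {ε δ : ℝ} (hεδ : ε < δ)
    (hστ : σ ≤ τ) (hτ : (τ : ℝ) ≤ σ + ε) (hsr : s ≤ r) (hr : (r : ℝ) ≤ s + ε) :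
    dist (τ, r) (σ, s) < δ := by
  have hστ : (σ : ℝ) ≤ τ := hστ
  have hsr : (s : ℝ) ≤ r := hsr
  rw [Prod.dist_eq, max_lt_iff, Subtype.dist_eq, Subtype.dist_eq, Real.dist_eq, Real.dist_eq,
    abs_lt, abs_lt]
  refine ⟨⟨?_, ?_⟩, ?_, ?_⟩ <;> linarith

namespace Circle

theorem isPreconnected_compl_closure {s : Set Circle} (hs : IsPreconnected s) :
    IsPreconnected (closure s)ᶜ := by
  refine isPreconnected_of_forall_pair fun u hu v hv => ?_
  obtain rfl | huv := eq_or_ne u v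
  · exact ⟨{u}, singleton_subset_iff.mpr hu, rfl, rfl, isPreconnected_singleton⟩
  have hclosed : ∀ x y : Circle, IsClosed (range (path x y)) := fun x y =>
    (isCompact_range (path x y).continuous).isClosed
  -- If `s` misses the closed arc from `x` to `y`, its closure lies in the opposite closed arc,
  -- which meets the first one only at the endpoints `x, y ∉ closure s`.
  have harc : ∀ x y, x ≠ y → x ∉ closure s → y ∉ closure s → s ⊆ (range (path x y))ᶜ →
      range (path x y) ⊆ (closure s)ᶜ := by
    intro x y hxy hx hy hs w hw hws
    have hcl : closure s ⊆ range (path y x) := closure_minimal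
      (hs.trans (compl_subset_iff_union.mpr (range_path_union_range_path hxy))) (hclosed y x)
    have : w ∈ ({x, y} : Set Circle) := range_path_inter_range_path hxy ▸ ⟨hw, hcl hws⟩
    rcases this with rfl | rfl <;> contradiction
  have hsuv : s ⊆ (range (path u v))ᶜ ∪ (range (path v u))ᶜ := by
    rw [← compl_inter, range_path_inter_range_path huv]
    rintro w hw (rfl | rfl)
    exacts [hu (subset_closure hw), hv (subset_closure hw)]
  have hdisj : Disjoint (range (path u v))ᶜ (range (path v u))ᶜ :=
    disjoint_compl_left_iff_subset.mpr
      (compl_subset_iff_union.mpr (range_path_union_range_path huv.symm))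
  rcases hs.subset_or_subset (hclosed u v).isOpen_compl (hclosed v u).isOpen_compl hdisj hsuv
    with h | h
  · exact ⟨_, harc u v huv hu hv h, (path u v).source_mem_range, (path u v).target_mem_range,
      isPreconnected_range (path u v).continuous⟩
  · exact ⟨_, harc v u huv.symm hv hu h, (path v u).target_mem_range,
      (path v u).source_mem_range, isPreconnected_range (path v u).continuous⟩

end Circle

namespace CNet

theorem isInterval_intCompl {s : Set Circle} (hs : IsInterval s) : IsInterval (intCompl s) := by
  obtain ⟨hso, hsc, hsd⟩ := hs
  rw [intCompl, interior_compl]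
  refine ⟨isClosed_closure.isOpen_compl,
    ⟨nonempty_compl.mpr fun h => hsd (dense_iff_closure_eq.mpr h),
      Circle.isPreconnected_compl_closure hsc.isPreconnected⟩, fun hd => ?_⟩
  obtain ⟨x, hx⟩ := hsc.nonempty
  exact closure_minimal (compl_subset_compl.mpr subset_closure) hso.isClosed_compl (hd x) hx

theorem exists_isInterval_mem_subset {U : Set Circle} (hU : IsOpen U) {z : Circle}
    (hz : z ∈ U) : ∃ V, IsInterval V ∧ z ∈ V ∧ V ⊆ U := by
  have := ChartedSpace.locallyConnectedSpace (EuclideanSpace ℝ (Fin 1)) Circle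
  -- Cutting `U` down to a small ball around `z` keeps `-z` out of the closure.
  set B : Set Circle := (↑) ⁻¹' Metric.ball (z : ℂ) 1
  have hB : IsOpen B := Metric.isOpen_ball.preimage continuous_subtype_val
  have hzUB : z ∈ U ∩ B := ⟨hz, Metric.mem_ball_self one_pos⟩
  refine ⟨connectedComponentIn (U ∩ B) z, ⟨(hU.inter hB).connectedComponentIn,
    isConnected_connectedComponentIn_iff.mpr hzUB, fun hd => ?_⟩, mem_connectedComponentIn hzUB,
    (connectedComponentIn_subset _ _).trans inter_subset_left⟩
  have hclB : closure B ⊆ (↑) ⁻¹' Metric.closedBall (z : ℂ) 1 :=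
    closure_minimal (preimage_mono Metric.ball_subset_closedBall)
      (Metric.isClosed_closedBall.preimage continuous_subtype_val)
  have h : dist ((-z : Circle) : ℂ) z ≤ 1 :=
    hclB (closure_mono ((connectedComponentIn_subset _ _).trans inter_subset_right) (hd (-z)))
  rw [dist_eq_norm, Circle.coe_neg, ← neg_add', norm_neg, ← two_mul, norm_mul, Circle.norm_coe] at h
  norm_num at h

theorem GoodPair.fst_ne_snd {A : CPair} (hA : GoodPair A) {x : Circle × Circle}
    (hx : memPair x A) : x.1 ≠ x.2 := fun h => hA.2.2.ne_of_mem hx.1 (h ▸ hx.2) rfl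

theorem GoodPair.isOpen_setOf_memPair {A : CPair} (hA : GoodPair A) :
    IsOpen {x | memPair x A} :=
  hA.1.1.prod hA.2.1.1

theorem subPair.trans {A B C : CPair} (hAB : subPair A B) (hBC : subPair B C) : subPair A C :=
  ⟨hAB.1.trans hBC.1, hAB.2.trans hBC.2⟩

theorem exists_goodPair_memPair_subPair {x : Circle × Circle} (hx : x.1 ≠ x.2) {U : CPair}
    (hU₁ : IsOpen U.1) (hU₂ : IsOpen U.2) (hxU : memPair x U) :
    ∃ A, GoodPair A ∧ memPair x A ∧ subPair A U := by
  obtain ⟨W₁, W₂, hW₁, hW₂, hxW₁, hxW₂, hW⟩ := t2_separation hx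
  obtain ⟨V₁, hV₁, hxV₁, hV₁W⟩ := exists_isInterval_mem_subset (hU₁.inter hW₁) ⟨hxU.1, hxW₁⟩
  obtain ⟨V₂, hV₂, hxV₂, hV₂W⟩ := exists_isInterval_mem_subset (hU₂.inter hW₂) ⟨hxU.2, hxW₂⟩
  exact ⟨(V₁, V₂), ⟨hV₁, hV₂, hW.mono (hV₁W.trans inter_subset_right)
    (hV₂W.trans inter_subset_right)⟩, ⟨hxV₁, hxV₂⟩,
    hV₁W.trans inter_subset_left, hV₂W.trans inter_subset_left⟩

theorem exists_goodPair_subPair_subPair {x : Circle × Circle} {P R : CPair} (hP : GoodPair P)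
    (hR : GoodPair R) (hxP : memPair x P) (hxR : memPair x R) :
    ∃ A, GoodPair A ∧ memPair x A ∧ subPair A P ∧ subPair A R := by
  obtain ⟨A, hA, hxA, hAPR⟩ := exists_goodPair_memPair_subPair (hP.fst_ne_snd hxP)
    (U := (P.1 ∩ R.1, P.2 ∩ R.2)) (hP.1.1.inter hR.1.1) (hP.2.1.1.inter hR.2.1.1)
    ⟨⟨hxP.1, hxR.1⟩, ⟨hxP.2, hxR.2⟩⟩
  exact ⟨A, hA, hxA, ⟨hAPR.1.trans inter_subset_left, hAPR.2.trans inter_subset_left⟩,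
    ⟨hAPR.1.trans inter_subset_right, hAPR.2.trans inter_subset_right⟩⟩

/-- `S` restricted to good pairs is a functor. -/
class PairSystem.IsCoherent (S : PairSystem) : Prop where
  incl_trans : ∀ ⦃A B C : CPair⦄, GoodPair A → GoodPair B → GoodPair C →
    ∀ (hAB : subPair A B) (hBC : subPair B C) (hAC : subPair A C),
      S.incl hAC = (S.incl hAB).trans (S.incl hBC)

section Fusion

variable {H0 : Type*} [NormedAddCommGroup H0] [InnerProductSpace ℂ H0] [CompleteSpace H0]
  {𝒜 : ConformalNet H0}
  {H K : Type*} [NormedAddCommGroup H] [InnerProductSpace ℂ H] [CompleteSpace H]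
  [NormedAddCommGroup K] [InnerProductSpace ℂ K] [CompleteSpace K]
  {ρH : NetRep 𝒜 H} {ρK : NetRep 𝒜 K}

theorem NetRep.bdd_mono {L : Type*} [NormedAddCommGroup L] [InnerProductSpace ℂ L]
    [CompleteSpace L] (ρ : NetRep 𝒜 L) {I J : Set Circle} (hI : IsInterval I)
    (hJ : IsInterval J) (hIJ : I ⊆ J) : ρ.bdd I ⊆ ρ.bdd J := by
  rintro _ ⟨T, hT, rfl⟩
  refine ⟨T, fun x hx => ?_, rfl⟩
  have hJI : intCompl J ⊆ intCompl I := interior_mono (compl_subset_compl.mpr hIJ)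
  have hIc := isInterval_intCompl hI
  have hJc := isInterval_intCompl hJ
  rw [← ρ.compat hJc hIc hJI hx]
  exact hT (𝒜.isotony hJc hIc hJI hx)

theorem FusionSystem.ext_of_generators (S : FusionSystem 𝒜 ρH ρK) {P : CPair}
    (hP : GoodPair P) {W : Type*} [NormedAddCommGroup W] [InnerProductSpace ℂ W]
    {V V' : (S.F P).V ≃ₗᵢ[ℂ] W}
    (h : ∀ ξ ∈ ρH.bdd P.1, ∀ η ∈ ρK.bdd P.2, V (S.u P ξ η) = V' (S.u P ξ η)) : V = V' := by
  have := ContinuousLinearMap.ext_on (S.isFusion hP).dense_span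
    (f := V.toContinuousLinearEquiv.toContinuousLinearMap)
    (g := V'.toContinuousLinearEquiv.toContinuousLinearMap)
    (by rintro _ ⟨ξ, hξ, η, hη, rfl⟩; exact h ξ hξ η hη)
  ext x
  exact DFunLike.congr_fun this x

instance FusionSystem.isCoherent (S : FusionSystem 𝒜 ρH ρK) : S.toPairSystem.IsCoherent where
  incl_trans A B C hA hB hC hAB hBC hAC := S.ext_of_generators hA fun ξ hξ η hη => by
    rw [LinearIsometryEquiv.trans_apply, S.incl_spec hAB hA hB ξ hξ η hη,
      S.incl_spec hAC hA hC ξ hξ η hη,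
      S.incl_spec hBC hB hC ξ (ρH.bdd_mono hA.1 hB.1 hAB.1 hξ) η
        (ρK.bdd_mono hA.2.1 hB.2.1 hAB.2 hη)]

end Fusion

theorem PairSystem.incl_symm_trans_incl_of_subPair {S : PairSystem} [S.IsCoherent]
    {A B P R : CPair} (hB : GoodPair B) (hA : GoodPair A) (hP : GoodPair P) (hR : GoodPair R)
    (hBA : subPair B A) (hAP : subPair A P) (hAR : subPair A R) :
    (S.incl hAP).symm.trans (S.incl hAR) =
      (S.incl (hBA.trans hAP)).symm.trans (S.incl (hBA.trans hAR)) := by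
  rw [IsCoherent.incl_trans hB hA hP hBA hAP, IsCoherent.incl_trans hB hA hR hBA hAR]
  ext; simp

/-- `C` identifies `S.F P` and `S.F R` through their common germ at the configuration `x` (the
colimit `H(x.1) ⊠ K(x.2)` of the paper), realised by a good pair around `x` inside both. -/
def IsGermIso (S : PairSystem) (x : Circle × Circle) (P R : CPair)
    (C : (S.F P).V ≃ₗᵢ[ℂ] (S.F R).V) : Prop :=
  ∃ A, GoodPair A ∧ memPair x A ∧ ∃ (hAP : subPair A P) (hAR : subPair A R),
    C = (S.incl hAP).symm.trans (S.incl hAR)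

namespace IsGermIso

variable {S : PairSystem} {x : Circle × Circle} {P Q R : CPair}

theorem exists_of_memPair (hP : GoodPair P) (hR : GoodPair R) (hxP : memPair x P)
    (hxR : memPair x R) : ∃ C, IsGermIso S x P R C := by
  obtain ⟨A, hA, hxA, hAP, hAR⟩ := exists_goodPair_subPair_subPair hP hR hxP hxR
  exact ⟨_, A, hA, hxA, hAP, hAR, rfl⟩

theorem refl (hP : GoodPair P) (hxP : memPair x P) :
    IsGermIso S x P P (LinearIsometryEquiv.refl ℂ _) := by
  obtain ⟨A, hA, hxA, hAP, -⟩ := exists_goodPair_subPair_subPair hP hP hxP hxP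
  exact ⟨A, hA, hxA, hAP, hAP, (LinearIsometryEquiv.symm_trans_self _).symm⟩

theorem symm {C : (S.F P).V ≃ₗᵢ[ℂ] (S.F R).V} (h : IsGermIso S x P R C) :
    IsGermIso S x R P C.symm := by
  obtain ⟨A, hA, hxA, hAP, hAR, rfl⟩ := h
  exact ⟨A, hA, hxA, hAR, hAP, by ext; simp⟩

theorem eventually {C : (S.F P).V ≃ₗᵢ[ℂ] (S.F R).V} (h : IsGermIso S x P R C) :
    ∀ᶠ y in nhds x, IsGermIso S y P R C := by
  obtain ⟨A, hA, hxA, hAP, hAR, rfl⟩ := h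
  filter_upwards [hA.isOpen_setOf_memPair.mem_nhds hxA] with y hyA
  exact ⟨A, hA, hyA, hAP, hAR, rfl⟩

variable [S.IsCoherent]

theorem eq_incl_symm_trans_incl {C : (S.F P).V ≃ₗᵢ[ℂ] (S.F R).V} (h : IsGermIso S x P R C)
    (hP : GoodPair P) (hR : GoodPair R) {G : CPair} (hG : GoodPair G) (hxG : memPair x G)
    (hGP : subPair G P) (hGR : subPair G R) : C = (S.incl hGP).symm.trans (S.incl hGR) := by
  obtain ⟨A, hA, hxA, hAP, hAR, rfl⟩ := h
  obtain ⟨B, hB, -, hBA, hBG⟩ := exists_goodPair_subPair_subPair hA hG hxA hxG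
  rw [PairSystem.incl_symm_trans_incl_of_subPair hB hA hP hR hBA,
    PairSystem.incl_symm_trans_incl_of_subPair hB hG hP hR hBG]

theorem unique {C C' : (S.F P).V ≃ₗᵢ[ℂ] (S.F R).V} (hP : GoodPair P) (hR : GoodPair R)
    (h : IsGermIso S x P R C) (h' : IsGermIso S x P R C') : C = C' := by
  obtain ⟨A, hA, hxA, hAP, hAR, rfl⟩ := h'
  exact h.eq_incl_symm_trans_incl hP hR hA hxA hAP hAR

theorem trans {C : (S.F P).V ≃ₗᵢ[ℂ] (S.F Q).V} {D : (S.F Q).V ≃ₗᵢ[ℂ] (S.F R).V}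
    (hP : GoodPair P) (hQ : GoodPair Q) (hR : GoodPair R)
    (hC : IsGermIso S x P Q C) (hD : IsGermIso S x Q R D) : IsGermIso S x P R (C.trans D) := by
  obtain ⟨A, hA, hxA, hAP, hAQ, -⟩ := id hC
  obtain ⟨B, hB, hxB, hBQ, hBR, -⟩ := id hD
  obtain ⟨G, hG, hxG, hGA, hGB⟩ := exists_goodPair_subPair_subPair hA hB hxA hxB
  refine ⟨G, hG, hxG, hGA.trans hAP, hGB.trans hBR, ?_⟩
  rw [hC.eq_incl_symm_trans_incl hP hQ hG hxG (hGA.trans hAP) (hGA.trans hAQ),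
    hD.eq_incl_symm_trans_incl hQ hR hG hxG (hGA.trans hAQ) (hGB.trans hBR)]
  ext; simp

/-- Germ identifications are locally constant. -/
theorem of_isPreconnected {C : (S.F P).V ≃ₗᵢ[ℂ] (S.F R).V} (hP : GoodPair P) (hR : GoodPair R)
    {T : Set (Circle × Circle)} (hT : IsPreconnected T) (hTP : ∀ y ∈ T, memPair y P)
    (hTR : ∀ y ∈ T, memPair y R) {y : Circle × Circle} (hxT : x ∈ T) (hyT : y ∈ T)
    (h : IsGermIso S x P R C) : IsGermIso S y P R C := by
  have hsub := hT.subset_left_of_subset_union (u := {z | IsGermIso S z P R C})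
    (v := {z | ∃ D, IsGermIso S z P R D ∧ D ≠ C})
    (isOpen_iff_mem_nhds.mpr fun z hz => hz.eventually)
    (isOpen_iff_mem_nhds.mpr fun z ⟨D, hD, hDC⟩ => hD.eventually.mono fun z' h => ⟨D, h, hDC⟩)
    (disjoint_left.mpr fun z hz ⟨D, hD, hDC⟩ => hDC (hD.unique hP hR hz))
    (fun z hz => by
      obtain ⟨D, hD⟩ := exists_of_memPair hP hR (hTP z hz) (hTR z hz)
      by_cases hDC : D = C
      · exact Or.inl (hDC ▸ hD)
      · exact Or.inr ⟨D, hD, hDC⟩)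
    ⟨x, hxT, h⟩
  exact hsub hyT

end IsGermIso

namespace PathCont2

variable {S : PairSystem} {a₀ a₁ : Conf2} {γ : Path a₀ a₁} {s t : unitInterval}
  {P Q R : CPair}

theorem le {V : (S.F P).V ≃ₗᵢ[ℂ] (S.F Q).V} (h : PathCont2 S γ s t P Q V) : s ≤ t := by
  induction h with
  | basic _ _ hst => exact hst
  | trans _ _ ih₁ ih₂ => exact ih₁.trans ih₂

theorem goodPair {V : (S.F P).V ≃ₗᵢ[ℂ] (S.F Q).V} (h : PathCont2 S γ s t P Q V) :
    GoodPair P ∧ GoodPair Q := by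
  induction h with
  | basic _ _ _ _ _ _ _ _ hP hQ => exact ⟨hP, hQ⟩
  | trans _ _ ih₁ ih₂ => exact ⟨ih₁.1, ih₂.2⟩

theorem memPair_endpoints {V : (S.F P).V ≃ₗᵢ[ℂ] (S.F Q).V} (h : PathCont2 S γ s t P Q V) :
    memPair (γ s).val P ∧ memPair (γ t).val Q := by
  induction h with
  | basic _ _ _ _ _ _ _ _ _ _ _ _ _ hsP' htQ' hP'P _ hQ'Q =>
    exact ⟨⟨hP'P.1 hsP'.1, hP'P.2 hsP'.2⟩, ⟨hQ'Q.1 htQ'.1, hQ'Q.2 htQ'.2⟩⟩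
  | trans _ _ ih₁ ih₂ => exact ⟨ih₁.1, ih₂.2⟩

theorem of_isGermIso (hst : s ≤ t) (hP : GoodPair P) (hQ : GoodPair Q) (hR : GoodPair R)
    (hcov : ∀ r, s ≤ r → r ≤ t → memPair (γ r).val R)
    {C₁ : (S.F P).V ≃ₗᵢ[ℂ] (S.F R).V} {C₂ : (S.F R).V ≃ₗᵢ[ℂ] (S.F Q).V}
    (h₁ : IsGermIso S (γ s).val P R C₁) (h₂ : IsGermIso S (γ t).val R Q C₂) :
    PathCont2 S γ s t P Q (C₁.trans C₂) := by
  obtain ⟨A, hA, hsA, hAP, hAR, rfl⟩ := h₁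
  obtain ⟨B, hB, htB, hBR, hBQ, rfl⟩ := h₂
  exact .basic s t hst P Q R A B hP hQ hR hA hB hsA htB hAP hAR hBQ hBR hcov

theorem of_source_memPair (hP : GoodPair P) (ha₀ : memPair a₀.val P) :
    PathCont2 S γ 0 0 P P
      ((LinearIsometryEquiv.refl ℂ _).trans (LinearIsometryEquiv.refl ℂ _)) := by
  have h0 : memPair (γ 0).val P := by rwa [γ.source]
  exact of_isGermIso le_rfl hP hP hP (fun r _ hr => le_antisymm hr r.2.1 ▸ h0) (.refl hP h0)
    (.refl hP h0)

theorem exists_split {V : (S.F P).V ≃ₗᵢ[ℂ] (S.F Q).V} (h : PathCont2 S γ s t P Q V)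
    {m : unitInterval} (hsm : s ≤ m) (hmt : m ≤ t) :
    ∃ (M : CPair) (V₁ : (S.F P).V ≃ₗᵢ[ℂ] (S.F M).V) (V₂ : (S.F M).V ≃ₗᵢ[ℂ] (S.F Q).V),
      PathCont2 S γ s m P M V₁ ∧ PathCont2 S γ m t M Q V₂ ∧ V = V₁.trans V₂ := by
  induction h with
  | basic s t hst P Q R P' Q' hP hQ hR hP' hQ' hsP' htQ' hP'P hP'R hQ'Q hQ'R hcov =>
    have hmR := hcov m hsm hmt
    have hm := IsGermIso.refl (S := S) hR hmR
    refine ⟨R, _, _, of_isGermIso hsm hP hR hR (fun r h₁ h₂ => hcov r h₁ (h₂.trans hmt))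
      ⟨P', hP', hsP', hP'P, hP'R, rfl⟩ hm,
      of_isGermIso hmt hR hQ hR (fun r h₁ h₂ => hcov r (hsm.trans h₁) h₂) hm
      ⟨Q', hQ', htQ', hQ'R, hQ'Q, rfl⟩, ?_⟩
    ext; simp
  | @trans s m' t P M' Q V₁ V₂ h₁ h₂ ih₁ ih₂ =>
    rcases le_total m m' with hmm' | hm'm
    · obtain ⟨M, W₁, W₂, hW₁, hW₂, rfl⟩ := ih₁ hsm hmm'
      exact ⟨M, W₁, W₂.trans V₂, hW₁, hW₂.trans h₂, (LinearIsometryEquiv.trans_assoc _ _ _).symm⟩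
    · obtain ⟨M, W₁, W₂, hW₁, hW₂, rfl⟩ := ih₂ hm'm hmt
      exact ⟨M, V₁.trans W₁, W₂, h₁.trans hW₁, hW₂, LinearIsometryEquiv.trans_assoc _ _ _⟩

variable [S.IsCoherent]

theorem eq_trans_of_forall_memPair {V : (S.F P).V ≃ₗᵢ[ℂ] (S.F Q).V}
    (h : PathCont2 S γ s t P Q V) (hR : GoodPair R)
    (hcov : ∀ r, s ≤ r → r ≤ t → memPair (γ r).val R)
    {C₁ : (S.F P).V ≃ₗᵢ[ℂ] (S.F R).V} {C₂ : (S.F R).V ≃ₗᵢ[ℂ] (S.F Q).V}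
    (h₁ : IsGermIso S (γ s).val P R C₁) (h₂ : IsGermIso S (γ t).val R Q C₂) :
    V = C₁.trans C₂ := by
  induction h generalizing R with
  | basic s t hst P Q Rb P' Q' hP hQ hRb hP' hQ' hsP' htQ' hP'P hP'R hQ'Q hQ'R hcovb =>
    obtain ⟨E, hE⟩ := IsGermIso.exists_of_memPair (S := S) hR hRb (hcov s le_rfl hst)
      (hcovb s le_rfl hst)
    have hEt : IsGermIso S (γ t).val R Rb E := hE.of_isPreconnected hR hRb
      (isPreconnected_Icc.image _ (continuous_subtype_val.comp γ.continuous).continuousOn)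
      (forall_mem_image.mpr fun r hr => hcov r hr.1 hr.2)
      (forall_mem_image.mpr fun r hr => hcovb r hr.1 hr.2) ⟨s, ⟨le_rfl, hst⟩, rfl⟩
      ⟨t, ⟨hst, le_rfl⟩, rfl⟩
    have e₁ : (S.incl hP'P).symm.trans (S.incl hP'R) = C₁.trans E :=
      IsGermIso.unique hP hRb ⟨P', hP', hsP', hP'P, hP'R, rfl⟩ (h₁.trans hP hR hRb hE)
    have e₂ : C₂ = E.trans ((S.incl hQ'R).symm.trans (S.incl hQ'Q)) :=
      IsGermIso.unique hR hQ h₂ (hEt.trans hR hRb hQ ⟨Q', hQ', htQ', hQ'R, hQ'Q, rfl⟩)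
    rw [e₁, e₂]
    ext; simp
  | @trans s m t P M Q V₁ V₂ hV₁ hV₂ ih₁ ih₂ =>
    have hsm := hV₁.le
    have hmt := hV₂.le
    obtain ⟨G, hG⟩ := IsGermIso.exists_of_memPair (S := S) hR hV₁.goodPair.2
      (hcov m hsm hmt) hV₁.memPair_endpoints.2
    rw [ih₁ hR (fun r h₁ h₂ => hcov r h₁ (h₂.trans hmt)) h₁ hG,
      ih₂ hR (fun r h₁ h₂ => hcov r (hsm.trans h₁) h₂) hG.symm h₂]
    ext; simp

theorem trans_eq_trans {P' Q' : CPair} {V : (S.F P).V ≃ₗᵢ[ℂ] (S.F Q).V}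
    {V' : (S.F P').V ≃ₗᵢ[ℂ] (S.F Q').V} (h : PathCont2 S γ s t P Q V)
    (h' : PathCont2 S γ s t P' Q' V') {Cs : (S.F P).V ≃ₗᵢ[ℂ] (S.F P').V}
    {Ct : (S.F Q).V ≃ₗᵢ[ℂ] (S.F Q').V} (hs : IsGermIso S (γ s).val P P' Cs)
    (ht : IsGermIso S (γ t).val Q Q' Ct) : V.trans Ct = Cs.trans V' := by
  induction h generalizing P' Q' with
  | basic s t hst P Q R A B hP hQ hR hA hB hsA htB hAP hAR hBQ hBR hcov =>
    obtain ⟨hP', hQ'⟩ := h'.goodPair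
    obtain ⟨hsP', htQ'⟩ := h'.memPair_endpoints
    obtain ⟨E₁, hE₁⟩ := IsGermIso.exists_of_memPair (S := S) hP' hR hsP' (hcov s le_rfl hst)
    obtain ⟨E₂, hE₂⟩ := IsGermIso.exists_of_memPair (S := S) hR hQ' (hcov t hst le_rfl) htQ'
    have e₁ : (S.incl hAP).symm.trans (S.incl hAR) = Cs.trans E₁ :=
      IsGermIso.unique hP hR ⟨A, hA, hsA, hAP, hAR, rfl⟩ (hs.trans hP hP' hR hE₁)
    have e₂ : ((S.incl hBR).symm.trans (S.incl hBQ)).trans Ct = E₂ :=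
      IsGermIso.unique hR hQ' (IsGermIso.trans hR hQ hQ' ⟨B, hB, htB, hBR, hBQ, rfl⟩ ht) hE₂
    calc _ = ((S.incl hAP).symm.trans (S.incl hAR)).trans
          (((S.incl hBR).symm.trans (S.incl hBQ)).trans Ct) := rfl
      _ = Cs.trans (E₁.trans E₂) := by rw [e₁, e₂]; rfl
      _ = Cs.trans V' := by rw [h'.eq_trans_of_forall_memPair hR hcov hE₁ hE₂]
  | @trans s m t P M Q V₁ V₂ hV₁ hV₂ ih₁ ih₂ =>
    obtain ⟨M', W₁, W₂, hW₁, hW₂, rfl⟩ := h'.exists_split hV₁.le hV₂.le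
    obtain ⟨Cm, hCm⟩ := IsGermIso.exists_of_memPair (S := S) hV₁.goodPair.2 hW₁.goodPair.2
      hV₁.memPair_endpoints.2 hW₁.memPair_endpoints.2
    calc (V₁.trans V₂).trans Ct = V₁.trans (V₂.trans Ct) := rfl
      _ = (V₁.trans Cm).trans W₂ := by rw [ih₂ hW₂ hCm ht]; rfl
      _ = Cs.trans (W₁.trans W₂) := by rw [ih₁ hW₁ hs hCm]; rfl

theorem unique {V V' : (S.F P).V ≃ₗᵢ[ℂ] (S.F Q).V} (h : PathCont2 S γ s t P Q V)
    (h' : PathCont2 S γ s t P Q V') : V = V' := by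
  simpa using h.trans_eq_trans h' (.refl h.goodPair.1 h.memPair_endpoints.1)
    (.refl h.goodPair.2 h.memPair_endpoints.2)

end PathCont2

theorem exists_pos_forall_dist_lt_goodPair {X : Type*} [PseudoMetricSpace X] [CompactSpace X]
    {f : X → Conf2} (hf : Continuous f) :
    ∃ δ > 0, ∀ x, ∃ R, GoodPair R ∧ ∀ y, dist y x < δ → memPair (f y).val R := by
  obtain ⟨δ, hδ, hball⟩ := lebesgue_number_lemma_of_metric isCompact_univ
    (c := fun R : {R // GoodPair R} => (fun y => (f y).val) ⁻¹' {x | memPair x R.1})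
    (fun R => R.2.isOpen_setOf_memPair.preimage (continuous_subtype_val.comp hf))
    (fun y _ => by
      obtain ⟨R, hR, hyR, -⟩ := exists_goodPair_memPair_subPair (f y).2 (U := (univ, univ))
        isOpen_univ isOpen_univ ⟨trivial, trivial⟩
      exact mem_iUnion.mpr ⟨⟨R, hR⟩, hyR⟩)
  refine ⟨δ, hδ, fun x => ?_⟩
  obtain ⟨R, hR⟩ := hball x trivial
  exact ⟨R.1, R.2, fun y hy => hR (Metric.mem_ball.mpr hy)⟩

section Homotopy

variable {S : PairSystem} [S.IsCoherent] {a₀ a₁ : Conf2} {P Q : CPair}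

theorem PathCont2.exists_common_extension {γ γ' : Path a₀ a₁} {u s t : unitInterval}
    {M R : CPair} {W : (S.F P).V ≃ₗᵢ[ℂ] (S.F M).V} (hW : PathCont2 S γ u s P M W)
    (hW' : PathCont2 S γ' u s P M W) (hR : GoodPair R) (hst : s ≤ t)
    (hcov : ∀ r, s ≤ r → r ≤ t → memPair (γ r).val R)
    (hcov' : ∀ r, s ≤ r → r ≤ t → memPair (γ' r).val R)
    {T : Set (Circle × Circle)} (hT : IsPreconnected T) (hTM : ∀ y ∈ T, memPair y M)
    (hTR : ∀ y ∈ T, memPair y R) (hγT : (γ s).val ∈ T) (hγ'T : (γ' s).val ∈ T) :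
    ∃ W', PathCont2 S γ u t P R W' ∧ PathCont2 S γ' u t P R W' := by
  have hM := hW.goodPair.2
  obtain ⟨C, hC⟩ := IsGermIso.exists_of_memPair (S := S) hM hR (hTM _ hγT) (hTR _ hγT)
  have hC' := hC.of_isPreconnected hM hR hT hTM hTR hγT hγ'T
  exact ⟨_, hW.trans (.of_isGermIso hst hM hR hR hcov hC (.refl hR (hcov t hst le_rfl))),
    hW'.trans (.of_isGermIso hst hM hR hR hcov' hC' (.refl hR (hcov' t hst le_rfl)))⟩

variable {γ γ' : Path a₀ a₁} {σ σ' : unitInterval}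

theorem isPreconnected_image_Icc_homotopy (F : γ.Homotopy γ') (t : unitInterval) :
    IsPreconnected ((fun τ => (F (τ, t)).val) '' Icc σ σ') :=
  isPreconnected_Icc.image _
    (continuous_subtype_val.comp (F.continuous.comp (by fun_prop))).continuousOn

theorem exists_common_pathCont2_eval (F : γ.Homotopy γ') {δ : ℝ} (hδ0 : 0 < δ)
    (hδ : ∀ p, ∃ R, GoodPair R ∧ ∀ q, dist q p < δ → memPair (F q).val R)
    (hσ : σ ≤ σ') (hσδ : (σ' : ℝ) ≤ σ + δ / 2) (hP : GoodPair P) (ha₀ : memPair a₀.val P) :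
    ∀ t : unitInterval, ∃ (M : CPair) (W : (S.F P).V ≃ₗᵢ[ℂ] (S.F M).V),
      (∀ y ∈ (fun τ => (F (τ, t)).val) '' Icc σ σ', memPair y M) ∧
        PathCont2 S (F.eval σ) 0 t P M W ∧ PathCont2 S (F.eval σ') 0 t P M W := by
  refine unitInterval.induction_of_step (half_pos hδ0) ?_
    fun s t hst htδ ⟨M, W, hTM, hW, hW'⟩ => ?_
  · exact ⟨P, _, forall_mem_image.mpr fun τ _ => by rw [F.source]; exact ha₀,
      .of_source_memPair hP ha₀, .of_source_memPair hP ha₀⟩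
  obtain ⟨R, hR, hFR⟩ := hδ (σ, s)
  have hrect : ∀ τ r, σ ≤ τ → τ ≤ σ' → s ≤ r → r ≤ t → memPair (F (τ, r)).val R :=
    fun τ r h₁ h₂ h₃ h₄ => hFR _ (unitInterval.dist_prod_lt_of_le (half_lt_self hδ0) h₁
      ((Subtype.coe_le_coe.mpr h₂).trans hσδ) h₃ ((Subtype.coe_le_coe.mpr h₄).trans htδ))
  obtain ⟨W', h, h'⟩ := hW.exists_common_extension hW' hR hst
    (fun r h₁ h₂ => by simpa using hrect σ r le_rfl hσ h₁ h₂)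
    (fun r h₁ h₂ => by simpa using hrect σ' r hσ le_rfl h₁ h₂)
    (isPreconnected_image_Icc_homotopy F s) hTM (forall_mem_image.mpr fun τ hτ => hrect τ s hτ.1 hτ.2 le_rfl hst)
    ⟨σ, ⟨le_rfl, hσ⟩, by simp⟩ ⟨σ', ⟨hσ, le_rfl⟩, by simp⟩
  exact ⟨R, W', forall_mem_image.mpr fun τ hτ => hrect τ t hτ.1 hτ.2 hst le_rfl, h, h'⟩

theorem exists_common_isPathCont2_eval (F : γ.Homotopy γ') {δ : ℝ} (hδ0 : 0 < δ)
    (hδ : ∀ p, ∃ R, GoodPair R ∧ ∀ q, dist q p < δ → memPair (F q).val R)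
    (hσ : σ ≤ σ') (hσδ : (σ' : ℝ) ≤ σ + δ / 2) (hP : GoodPair P) (hQ : GoodPair Q)
    (ha₀ : memPair a₀.val P) (ha₁ : memPair a₁.val Q) :
    ∃ W, IsPathCont2 S (F.eval σ) P Q W ∧ IsPathCont2 S (F.eval σ') P Q W := by
  obtain ⟨M, W, hTM, hW, hW'⟩ := exists_common_pathCont2_eval (S := S) F hδ0 hδ hσ hσδ hP ha₀ 1
  have hcov : ∀ τ r : unitInterval, 1 ≤ r → memPair (F.eval τ r).val Q := fun τ r hr => by
    rw [le_antisymm unitInterval.le_one' hr, Path.target]; exact ha₁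
  exact hW.exists_common_extension hW' hQ le_rfl (fun r h _ => hcov σ r h)
    (fun r h _ => hcov σ' r h) (isPreconnected_image_Icc_homotopy F 1) hTM
    (forall_mem_image.mpr fun τ _ => by rw [F.target]; exact ha₁)
    ⟨σ, ⟨le_rfl, hσ⟩, by simp⟩ ⟨σ', ⟨hσ, le_rfl⟩, by simp⟩

theorem IsPathCont2.eq_of_homotopy (F : γ.Homotopy γ') {V V' : (S.F P).V ≃ₗᵢ[ℂ] (S.F Q).V}
    (h : IsPathCont2 S γ P Q V) (h' : IsPathCont2 S γ' P Q V') : V = V' := by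
  obtain ⟨δ, hδ0, hδ⟩ := exists_pos_forall_dist_lt_goodPair F.continuous
  obtain ⟨hP, hQ⟩ := PathCont2.goodPair h
  obtain ⟨ha₀, ha₁⟩ := PathCont2.memPair_endpoints h
  rw [γ.source] at ha₀
  rw [γ.target] at ha₁
  suffices hall : ∀ σ W, IsPathCont2 S (F.eval σ) P Q W → W = V from
    (hall 1 V' (by rwa [F.eval_one])).symm
  refine unitInterval.induction_of_step (half_pos hδ0) (fun W hW => ?_)
    fun σ σ' hσ hσδ ih W hW => ?_
  · rw [F.eval_zero] at hW
    exact PathCont2.unique hW h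
  · obtain ⟨W₀, h₀, h₀'⟩ := exists_common_isPathCont2_eval (S := S) F hδ0 hδ hσ hσδ hP hQ ha₀ ha₁
    exact (PathCont2.unique hW h₀').trans (ih W₀ h₀)

end Homotopy

theorem pathCont2_welldefined_and_homotopy_invariant_general {H0 : Type*} [NormedAddCommGroup H0]
    [InnerProductSpace ℂ H0] [CompleteSpace H0] {𝒜 : ConformalNet H0}
    {H K : Type*} [NormedAddCommGroup H] [InnerProductSpace ℂ H] [CompleteSpace H]
    [NormedAddCommGroup K] [InnerProductSpace ℂ K] [CompleteSpace K]
    {ρH : NetRep 𝒜 H} {ρK : NetRep 𝒜 K}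
    (S : FusionSystem 𝒜 ρH ρK) {a₀ a₁ : Conf2}
    (P Q : CPair) :
    -- independence of the choice of partition defining the path continuation
    (∀ (γ : Path a₀ a₁) (V V' : (S.F P).V ≃ₗᵢ[ℂ] (S.F Q).V),
      IsPathCont2 S.toPairSystem γ P Q V → IsPathCont2 S.toPairSystem γ P Q V' →
      V = V') ∧
    -- homotopy invariance (rel endpoints)
    (∀ (γ γ' : Path a₀ a₁), γ.Homotopic γ' →
      ∀ (V V' : (S.F P).V ≃ₗᵢ[ℂ] (S.F Q).V),
      IsPathCont2 S.toPairSystem γ P Q V → IsPathCont2 S.toPairSystem γ' P Q V' →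
      V = V') :=
  ⟨fun _ _ _ hV hV' => PathCont2.unique hV hV',
    fun _ _ ⟨F⟩ _ _ hV hV' => IsPathCont2.eq_of_homotopy F hV hV'⟩

/-- Let `𝒜` be a conformal net and `H, K ∈ Rep(𝒜)`.  The path
continuation `γ^• : H(z₀) ⊠ K(ζ₀) → H(z₁) ⊠ K(ζ₁)` associated to a path `γ` in
`Conf₂(S¹)` is independent of the choice of partition of `[0,1]` (and of covering
intervals) used to define it, and homotopic paths (rel endpoints) in `Conf₂(S¹)` induce
the same path continuation. -/
theorem pathCont2_welldefined_and_homotopy_invariant {H0 : Type*} [NormedAddCommGroup H0]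
    [InnerProductSpace ℂ H0] [CompleteSpace H0] {𝒜 : ConformalNet H0}
    {H K : Type*} [NormedAddCommGroup H] [InnerProductSpace ℂ H] [CompleteSpace H]
    [NormedAddCommGroup K] [InnerProductSpace ℂ K] [CompleteSpace K]
    {ρH : NetRep 𝒜 H} {ρK : NetRep 𝒜 K}
    (S : FusionSystem 𝒜 ρH ρK) {a₀ a₁ : Conf2}
    (P Q : CPair) (hP : GoodPair P) (hQ : GoodPair Q)
    (ha₀ : memPair a₀.val P) (ha₁ : memPair a₁.val Q) :
    -- independence of the choice of partition defining the path continuation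
    (∀ (γ : Path a₀ a₁) (V V' : (S.F P).V ≃ₗᵢ[ℂ] (S.F Q).V),
      IsPathCont2 S.toPairSystem γ P Q V → IsPathCont2 S.toPairSystem γ P Q V' →
      V = V') ∧
    -- homotopy invariance (rel endpoints)
    (∀ (γ γ' : Path a₀ a₁), γ.Homotopic γ' →
      ∀ (V V' : (S.F P).V ≃ₗᵢ[ℂ] (S.F Q).V),
      IsPathCont2 S.toPairSystem γ P Q V → IsPathCont2 S.toPairSystem γ' P Q V' →
      V = V') :=
  pathCont2_welldefined_and_homotopy_invariant_general S P Q

end CNet
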